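/- If the metric of a Kenmotsu manifold of dimension 2n+1 is a gradient almost *-Ricci soliton, then ξ(f + λ) = r/(2n) + 2n + 2, where r is the scalar curvature, f the potential function, and λ the soliton function. -/

import Mathlib

/-- An abstract algebraic model of a `(2n+1)`-dimensional Kenmotsu manifold:
`C` plays the role of the ring of smooth functions on the manifold and vector
fields are modelled as `ℝ`-derivations of `C`.  A global orthonormal frame `e`
is included in order to express traces (Ricci tensor, scalar curvature). -/
structure KenmotsuManifold (n : ℕ) (C : Type*) [CommRing C] [Algebra ℝ C] where
  /-- the Riemannian metric -/
  g : Derivation ℝ C C → Derivation ℝ C C → C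
  /-- the structure `(1,1)`-tensor field -/
  φ : Derivation ℝ C C → Derivation ℝ C C
  /-- the Reeb (characteristic) vector field -/
  ξ : Derivation ℝ C C
  /-- the contact `1`-form -/
  η : Derivation ℝ C C → C
  /-- the Levi-Civita connection -/
  nabla : Derivation ℝ C C → Derivation ℝ C C → Derivation ℝ C C
  /-- a global orthonormal frame, used to take traces -/
  e : Fin (2 * n + 1) → Derivation ℝ C C
  g_symm : ∀ X Y, g X Y = g Y X
  g_add_left : ∀ X Y Z, g (X + Y) Z = g X Z + g Y Z
  g_smul_left : ∀ (f : C) (X Y), g (f • X) Y = f * g X Y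
  g_nondeg : ∀ X, (∀ Y, g X Y = 0) → X = 0
  g_frame : ∀ i j, g (e i) (e j) = if i = j then 1 else 0
  frame_span : ∀ X : Derivation ℝ C C, X = ∑ i, g X (e i) • e i
  phi_phi : ∀ X, φ (φ X) = -X + η X • ξ
  phi_linear : ∀ (f : C) (X Y), φ (f • X + Y) = f • φ X + φ Y
  eta_xi : η ξ = 1
  eta_def : ∀ X, η X = g X ξ
  compat_phi : ∀ X Y, g (φ X) (φ Y) = g X Y - η X * η Y
  nabla_add_left : ∀ X Y Z, nabla (X + Y) Z = nabla X Z + nabla Y Z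
  nabla_smul_left : ∀ (f : C) (X Y), nabla (f • X) Y = f • nabla X Y
  nabla_add_right : ∀ X Y Z, nabla X (Y + Z) = nabla X Y + nabla X Z
  nabla_leibniz : ∀ (X) (f : C) (Y), nabla X (f • Y) = X f • Y + f • nabla X Y
  torsion_free : ∀ X Y, nabla X Y - nabla Y X = ⁅X, Y⁆
  metric_compat : ∀ X Y Z, X (g Y Z) = g (nabla X Y) Z + g Y (nabla X Z)
  /-- the Kenmotsu condition `(∇_X φ)Y = g(φX,Y)ξ - η(Y)φX` -/
  kenmotsu : ∀ X Y, nabla X (φ Y) - φ (nabla X Y) = g (φ X) Y • ξ - η Y • φ X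

namespace KenmotsuManifold

variable {n : ℕ} {C : Type*} [CommRing C] [Algebra ℝ C] (K : KenmotsuManifold n C)

/-- the Riemann curvature tensor `R(X,Y)Z = ∇_X∇_Y Z - ∇_Y∇_X Z - ∇_{[X,Y]}Z` -/
def Rm (X Y Z : Derivation ℝ C C) : Derivation ℝ C C :=
  K.nabla X (K.nabla Y Z) - K.nabla Y (K.nabla X Z) - K.nabla ⁅X, Y⁆ Z

/-- the Ricci tensor `S(X,Y) = trace (Z ↦ R(Z,X)Y)` -/
def S (X Y : Derivation ℝ C C) : C := ∑ i, K.g (K.Rm (K.e i) X Y) (K.e i)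

/-- the Ricci operator `Q`, `g(QX,Y) = S(X,Y)` -/
def Q (X : Derivation ℝ C C) : Derivation ℝ C C := ∑ i, K.S X (K.e i) • K.e i

/-- the scalar curvature `r` -/
def r : C := ∑ i, K.S (K.e i) (K.e i)

/-- the `*`-Ricci tensor `S*(X,Y) = (1/2) trace (Z ↦ R(X,φY)φZ)` -/
noncomputable def Sstar (X Y : Derivation ℝ C C) : C :=
  (2 : ℝ)⁻¹ • ∑ i, K.g (K.Rm X (K.φ Y) (K.φ (K.e i))) (K.e i)

/-- the covariant derivative `(∇_X Q)Y` of the Ricci operator -/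
def nablaQ (X Y : Derivation ℝ C C) : Derivation ℝ C C :=
  K.nabla X (K.Q Y) - K.Q (K.nabla X Y)

/-- the Lie derivative `(£_V g)(X,Y)` of the metric -/
def lieG (V X Y : Derivation ℝ C C) : C :=
  V (K.g X Y) - K.g ⁅V, X⁆ Y - K.g X ⁅V, Y⁆

/-- the Lie derivative `(£_V S)(X,Y)` of the Ricci tensor -/
def lieS (V X Y : Derivation ℝ C C) : C :=
  V (K.S X Y) - K.S ⁅V, X⁆ Y - K.S X ⁅V, Y⁆

/-- `g` is a `*`-Ricci soliton with potential vector field `V` and soliton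
constant `l`: `£_V g + 2S* + 2l g = 0`. -/
def IsStarRicciSoliton (V : Derivation ℝ C C) (l : ℝ) : Prop :=
  ∀ X Y, K.lieG V X Y + 2 * K.Sstar X Y + (2 * l) • K.g X Y = 0

/-- `g` is a gradient almost `*`-Ricci soliton with potential function `f`
(with gradient `F`, i.e. `g(F,X) = Xf`) and soliton function `l`:
`Hess f + S* + l g = 0`. -/
def IsGradAlmostStarRicciSoliton (f : C) (F : Derivation ℝ C C) (l : C) : Prop :=
  (∀ X, K.g F X = X f) ∧ ∀ X Y, K.g (K.nabla X F) Y + K.Sstar X Y + l * K.g X Y = 0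

/-- `M` is `η`-Einstein: `S = α g + β η⊗η`. -/
def IsEtaEinstein : Prop :=
  ∃ α β : C, ∀ X Y, K.S X Y = α * K.g X Y + β * (K.η X * K.η Y)

end KenmotsuManifold

namespace KenmotsuManifold
section Infra
variable {n : ℕ} {C : Type*} [CommRing C] [Algebra ℝ C] (K : KenmotsuManifold n C)
local notation "D" => Derivation ℝ C C

lemma g_add_right (X Y Z : D) : K.g X (Y + Z) = K.g X Y + K.g X Z := by
  rw [K.g_symm, K.g_add_left, K.g_symm Y, K.g_symm Z]

lemma g_smul_right (f : C) (X Y : D) : K.g X (f • Y) = f * K.g X Y := by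
  rw [K.g_symm, K.g_smul_left, K.g_symm]

lemma g_zero_left (X : D) : K.g 0 X = 0 := by
  have h := K.g_add_left 0 0 X
  simpa using h.symm

lemma g_zero_right (X : D) : K.g X 0 = 0 := by rw [K.g_symm]; exact K.g_zero_left X

lemma g_neg_left (X Y : D) : K.g (-X) Y = -K.g X Y := by
  have h := K.g_add_left X (-X) Y
  simp only [add_neg_cancel, K.g_zero_left] at h
  exact eq_neg_of_add_eq_zero_right h.symm

lemma g_sub_left (X Y Z : D) : K.g (X - Y) Z = K.g X Z - K.g Y Z := by
  rw [sub_eq_add_neg, K.g_add_left, K.g_neg_left, sub_eq_add_neg]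

lemma g_neg_right (X Y : D) : K.g X (-Y) = -K.g X Y := by
  rw [K.g_symm, K.g_neg_left, K.g_symm]

lemma g_sub_right (X Y Z : D) : K.g X (Y - Z) = K.g X Y - K.g X Z := by
  rw [K.g_symm, K.g_sub_left, K.g_symm Y, K.g_symm Z]

lemma g_sum_left {ι : Type*} (s : Finset ι) (v : ι → D) (Y : D) :
    K.g (∑ i ∈ s, v i) Y = ∑ i ∈ s, K.g (v i) Y := by
  classical
  induction s using Finset.induction_on with
  | empty => simpa using K.g_zero_left Y
  | insert _ _ h ih => rw [Finset.sum_insert h, K.g_add_left, ih, Finset.sum_insert h]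

lemma g_sum_right {ι : Type*} (s : Finset ι) (v : ι → D) (Y : D) :
    K.g Y (∑ i ∈ s, v i) = ∑ i ∈ s, K.g Y (v i) := by
  rw [K.g_symm, K.g_sum_left]
  exact Finset.sum_congr rfl fun i _ => K.g_symm _ _

lemma nabla_zero_right (X : D) : K.nabla X 0 = 0 := by
  have h := K.nabla_add_right X 0 0
  simpa using h.symm

lemma nabla_zero_left (X : D) : K.nabla 0 X = 0 := by
  have h := K.nabla_add_left 0 0 X
  simpa using h.symm

lemma nabla_neg_right (X Y : D) : K.nabla X (-Y) = -K.nabla X Y := by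
  have h := K.nabla_add_right X Y (-Y)
  simp only [add_neg_cancel, K.nabla_zero_right] at h
  exact eq_neg_of_add_eq_zero_right h.symm

lemma nabla_sub_right (X Y Z : D) : K.nabla X (Y - Z) = K.nabla X Y - K.nabla X Z := by
  rw [sub_eq_add_neg, K.nabla_add_right, K.nabla_neg_right, sub_eq_add_neg]

lemma nabla_neg_left (X Y : D) : K.nabla (-X) Y = -K.nabla X Y := by
  have h := K.nabla_add_left X (-X) Y
  simp only [add_neg_cancel, K.nabla_zero_left] at h
  exact eq_neg_of_add_eq_zero_right h.symm

lemma nabla_sub_left (X Y Z : D) : K.nabla (X - Y) Z = K.nabla X Z - K.nabla Y Z := by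
  rw [sub_eq_add_neg, K.nabla_add_left, K.nabla_neg_left, sub_eq_add_neg]

lemma eta_add (X Y : D) : K.η (X + Y) = K.η X + K.η Y := by
  rw [K.eta_def, K.eta_def, K.eta_def, K.g_add_left]

lemma eta_smul (f : C) (X : D) : K.η (f • X) = f * K.η X := by
  rw [K.eta_def, K.eta_def, K.g_smul_left]

lemma eta_neg (X : D) : K.η (-X) = -K.η X := by
  rw [K.eta_def, K.eta_def, K.g_neg_left]

lemma eta_sub (X Y : D) : K.η (X - Y) = K.η X - K.η Y := by
  rw [K.eta_def, K.eta_def, K.eta_def, K.g_sub_left]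

lemma eta_zero : K.η 0 = 0 := by rw [K.eta_def, K.g_zero_left]

lemma phi_add (X Y : D) : K.φ (X + Y) = K.φ X + K.φ Y := by
  have h := K.phi_linear 1 X Y
  simpa using h

lemma phi_zero : K.φ 0 = 0 := by
  have h := K.phi_linear 1 0 0
  simp only [one_smul, add_zero] at h
  have : K.φ 0 + K.φ 0 = K.φ 0 + 0 := by rw [add_zero]; exact h.symm
  exact (add_left_cancel this)

lemma phi_smul (f : C) (X : D) : K.φ (f • X) = f • K.φ X := by
  have h := K.phi_linear f X 0
  simpa [K.phi_zero] using h

lemma phi_neg (X : D) : K.φ (-X) = -K.φ X := by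
  have h := K.phi_add X (-X)
  simp only [add_neg_cancel, K.phi_zero] at h
  exact eq_neg_of_add_eq_zero_right h.symm

lemma phi_sub (X Y : D) : K.φ (X - Y) = K.φ X - K.φ Y := by
  rw [sub_eq_add_neg, K.phi_add, K.phi_neg, sub_eq_add_neg]

lemma phi_sum {ι : Type*} (s : Finset ι) (v : ι → D) :
    K.φ (∑ i ∈ s, v i) = ∑ i ∈ s, K.φ (v i) := by
  classical
  induction s using Finset.induction_on with
  | empty => simpa using K.phi_zero
  | insert _ _ h ih => rw [Finset.sum_insert h, K.phi_add, ih, Finset.sum_insert h]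

lemma g_xi_xi : K.g K.ξ K.ξ = 1 := by rw [← K.eta_def, K.eta_xi]

lemma real_cancel {r : ℝ} (hr : r ≠ 0) {x : C} (h : algebraMap ℝ C r * x = 0) : x = 0 := by
  have h2 := congrArg (fun y => algebraMap ℝ C r⁻¹ * y) h
  simpa [← mul_assoc, ← map_mul, inv_mul_cancel₀ hr] using h2

lemma two_cancel {x : C} (h : x + x = 0) : x = 0 := by
  refine real_cancel (r := 2) two_ne_zero ?_
  have h2 : algebraMap ℝ C 2 = (2:C) := by
    rw [map_ofNat]
  rw [h2]
  linear_combination h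

end Infra
section Frame
variable {n : ℕ} {C : Type*} [CommRing C] [Algebra ℝ C] (K : KenmotsuManifold n C)
local notation "D" => Derivation ℝ C C

lemma deriv_sum_apply {ι : Type*} (s : Finset ι) (V : ι → D) (a : C) :
    (∑ i ∈ s, V i) a = ∑ i ∈ s, V i a := by
  classical
  induction s using Finset.induction_on with
  | empty => simp
  | insert _ _ h ih => rw [Finset.sum_insert h, Derivation.add_apply, ih, Finset.sum_insert h]

lemma deriv_mul (X : D) (b c : C) : X (b * c) = b * X c + c * X b := by
  rw [Derivation.leibniz]; simp [smul_eq_mul]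

lemma sum_g_mul (X Y : D) : ∑ i, K.g X (K.e i) * K.g (K.e i) Y = K.g X Y := by
  conv_rhs => rw [K.frame_span X, K.g_sum_left]
  refine Finset.sum_congr rfl fun i _ => ?_
  rw [K.g_smul_left]

lemma sum_eta_g (X : D) : ∑ i, K.η (K.e i) * K.g (K.e i) X = K.η X := by
  have h := K.sum_g_mul K.ξ X
  simp only [K.eta_def]
  rw [K.g_symm X K.ξ, ← h]
  refine Finset.sum_congr rfl fun i _ => ?_
  rw [K.g_symm (K.e i) K.ξ]

lemma sum_gee : ∑ i : Fin (2*n+1), K.g (K.e i) (K.e i) = ((2*n+1 : ℕ) : C) := by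
  have : ∀ i : Fin (2*n+1), K.g (K.e i) (K.e i) = 1 := by
    intro i; rw [K.g_frame]; simp
  rw [Finset.sum_congr rfl fun i _ => this i]
  simp [Finset.card_univ]

lemma sum_eta_sq : ∑ i, K.η (K.e i) * K.η (K.e i) = 1 := by
  have h := K.sum_eta_g K.ξ
  rw [K.eta_xi] at h
  simp only [K.eta_def] at h ⊢
  exact h

lemma xi_apply (a : C) : K.ξ a = ∑ i, K.η (K.e i) * K.e i a := by
  conv_lhs => rw [K.frame_span K.ξ]
  rw [deriv_sum_apply]
  refine Finset.sum_congr rfl fun i _ => ?_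
  rw [Derivation.smul_apply, smul_eq_mul, K.eta_def, K.g_symm (K.e i) K.ξ]

lemma g_frame_apply (X : D) (i j : Fin (2*n+1)) : X (K.g (K.e i) (K.e j)) = 0 := by
  rw [K.g_frame]
  by_cases h : i = j <;> simp [h]

end Frame

section CZero
variable {n : ℕ} {C : Type*} [CommRing C] [Algebra ℝ C] (K : KenmotsuManifold n C)
local notation "D" => Derivation ℝ C C

/-- the possibly-nonzero defect `c = g(φξ, ξ)` -/
noncomputable def cdef : C := K.g (K.φ K.ξ) K.ξ

lemma skew0 (X Y : D) :
    K.g (K.φ X) Y + K.g X (K.φ Y) = K.η Y * K.g (K.φ X) K.ξ + K.η X * K.g (K.φ Y) K.ξ := by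
  have h := K.compat_phi X (K.φ Y)
  rw [K.phi_phi Y] at h
  rw [K.g_add_right, K.g_neg_right, K.g_smul_right] at h
  rw [K.eta_def (K.φ Y)] at h
  linear_combination -h

lemma phi_xi_eq : K.φ K.ξ = K.cdef • K.ξ := by
  apply eq_of_sub_eq_zero
  apply K.g_nondeg
  intro Y
  rw [K.g_sub_left, K.g_smul_left]
  have h := K.skew0 Y K.ξ
  rw [K.eta_xi, one_mul] at h
  have : K.g Y (K.φ K.ξ) = K.η Y * K.cdef := by
    unfold cdef; linear_combination h
  rw [K.g_symm (K.φ K.ξ) Y, this, K.g_symm K.ξ Y, ← K.eta_def]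
  ring

lemma c_mul_u (X : D) : K.cdef * K.g (K.φ X) K.ξ = 0 := by
  have h := K.compat_phi X K.ξ
  rw [K.phi_xi_eq, K.g_smul_right, ← K.eta_def X, K.eta_xi] at h
  linear_combination h

lemma cdef_eq : K.cdef = K.g (K.φ K.ξ) K.ξ := rfl

lemma c_sq : K.cdef * K.cdef = 0 := by
  have h := K.c_mul_u K.ξ
  rw [← K.cdef_eq] at h
  exact h

lemma c_mul_dc (X : D) : K.cdef * X K.cdef = 0 := by
  have h := congrArg X K.c_sq
  rw [deriv_mul] at h
  simp only [map_zero] at h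
  exact two_cancel (by linear_combination h)

lemma g_nabla_xi_xi (X : D) : K.g (K.nabla X K.ξ) K.ξ = 0 := by
  have h := K.metric_compat X K.ξ K.ξ
  rw [K.g_xi_xi] at h
  simp only [Derivation.map_one_eq_zero] at h
  rw [K.g_symm K.ξ (K.nabla X K.ξ)] at h
  exact two_cancel (by linear_combination -h)

lemma nabla_xi_pre (X : D) :
    K.nabla X K.ξ = X - K.η X • K.ξ - K.cdef • K.φ X := by
  have hk := K.kenmotsu X K.ξ
  rw [K.eta_xi, one_smul, K.phi_xi_eq, K.nabla_leibniz] at hk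
  have hA := sub_eq_iff_eq_add.mp hk
  have h1 : K.φ (K.nabla X K.ξ) =
      (X K.cdef • K.ξ + K.cdef • K.nabla X K.ξ) - (K.g (K.φ X) K.ξ • K.ξ - K.φ X) := by
    refine eq_sub_of_add_eq ?_
    rw [add_comm]; exact hA.symm
  have h2 := congrArg K.φ h1
  rw [K.phi_phi (K.nabla X K.ξ)] at h2
  rw [K.eta_def, K.g_nabla_xi_xi, zero_smul, add_zero] at h2
  rw [K.phi_sub, K.phi_add, K.phi_sub, K.phi_smul, K.phi_smul, K.phi_smul] at h2
  rw [K.phi_xi_eq, K.phi_phi X] at h2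
  rw [smul_smul, smul_smul] at h2
  rw [h1] at h2
  have hc2 : K.cdef • ((X K.cdef • K.ξ + K.cdef • K.nabla X K.ξ)
      - (K.g (K.φ X) K.ξ • K.ξ - K.φ X)) = K.cdef • K.φ X := by
    rw [smul_sub, smul_add, smul_sub, smul_smul, smul_smul, smul_smul]
    rw [K.c_mul_dc X, K.c_sq, K.c_mul_u X]
    simp only [zero_smul]
    abel
  rw [hc2] at h2
  have hc1 : X K.cdef * K.cdef = 0 := by linear_combination K.c_mul_dc X
  have hc3 : K.g (K.φ X) K.ξ * K.cdef = 0 := by linear_combination K.c_mul_u X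
  rw [hc1, hc3] at h2
  simp only [zero_smul] at h2
  rw [neg_eq_iff_eq_neg] at h2
  rw [h2]; abel
end CZero
section CZero2
variable {n : ℕ} {C : Type*} [CommRing C] [Algebra ℝ C] (K : KenmotsuManifold n C)
local notation "D" => Derivation ℝ C C

lemma c_ann (z : C) : K.cdef * (K.cdef * z) = 0 := by
  rw [← mul_assoc, K.c_sq, zero_mul]

lemma eta_nabla_pre (X Y : D) :
    X (K.η Y) = K.η (K.nabla X Y) + K.g Y (K.nabla X K.ξ) := by
  have h := K.metric_compat X Y K.ξ
  rw [← K.eta_def, ← K.eta_def] at h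
  exact h

lemma u_eq (X : D) : K.g (K.φ X) K.ξ = X K.cdef + K.cdef * K.η X := by
  have hk := K.kenmotsu X K.ξ
  rw [K.eta_xi, one_smul, K.phi_xi_eq, K.nabla_leibniz] at hk
  have hg := congrArg (fun T : Derivation ℝ C C => K.g T K.ξ) hk
  rw [K.g_sub_left, K.g_add_left, K.g_smul_left, K.g_smul_left, K.g_xi_xi,
    K.g_nabla_xi_xi, K.g_sub_left, K.g_smul_left, K.g_xi_xi] at hg
  have h2 : K.g (K.φ (K.nabla X K.ξ)) K.ξ = X K.cdef := by linear_combination -hg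
  rw [K.nabla_xi_pre, K.phi_sub, K.phi_sub, K.phi_smul, K.phi_smul,
    K.phi_xi_eq, K.phi_phi X] at h2
  simp only [K.g_sub_left, K.g_add_left, K.g_smul_left, K.g_neg_left, K.g_xi_xi,
    smul_smul] at h2
  rw [← K.eta_def X] at h2
  linear_combination h2

lemma xic : K.ξ K.cdef = 0 := by
  have h := K.u_eq K.ξ
  rw [← K.cdef_eq, K.eta_xi, mul_one] at h
  linear_combination -h

lemma phic (X : D) : (K.φ X) K.cdef = 0 := by
  have h := K.u_eq (K.φ X)
  rw [K.phi_phi X, K.g_add_left, K.g_neg_left, K.g_smul_left, K.g_xi_xi,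
    ← K.eta_def X, K.eta_def (K.φ X)] at h
  have h2 := K.c_mul_u X
  linear_combination -h - h2

lemma dc (X : D) : X K.cdef = 0 := by
  have hX : X = K.η X • K.ξ - K.φ (K.φ X) := by rw [K.phi_phi]; abel
  have h := congrArg (fun T : Derivation ℝ C C => T K.cdef) hX
  simp only [Derivation.sub_apply, Derivation.smul_apply, smul_eq_mul] at h
  rw [K.xic, K.phic, mul_zero, zero_sub] at h
  simpa using h

lemma u_simp (X : D) : K.g (K.φ X) K.ξ = K.cdef * K.η X := by
  rw [K.u_eq, K.dc, zero_add]

lemma key_c (X Y : D) : K.cdef * (K.g X Y - K.η X * K.η Y) = 0 := by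
  have hk := congrArg (fun T : Derivation ℝ C C => K.g T K.ξ) (K.kenmotsu X Y)
  rw [K.g_sub_left, K.g_sub_left, K.g_smul_left, K.g_smul_left, K.g_xi_xi] at hk
  have h1 := K.metric_compat X (K.φ Y) K.ξ
  rw [K.u_simp Y] at h1
  have h3 : X (K.cdef * K.η Y) = K.cdef * X (K.η Y) := by
    rw [deriv_mul, K.dc, mul_zero, add_zero]
  have h4 : K.g (K.φ (K.nabla X Y)) K.ξ = K.cdef * K.η (K.nabla X Y) := K.u_simp _
  have h5 : K.g (K.φ Y) (K.nabla X K.ξ) = K.g (K.φ Y) X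
      - K.η X * (K.cdef * K.η Y) - K.cdef * (K.g Y X - K.η Y * K.η X) := by
    rw [K.nabla_xi_pre, K.g_sub_right, K.g_sub_right, K.g_smul_right,
      K.g_smul_right, K.u_simp Y, K.compat_phi Y X]
  have h7 := K.eta_nabla_pre X Y
  have h8 : K.g Y (K.nabla X K.ξ) = K.g Y X - K.η X * K.η Y - K.cdef * K.g Y (K.φ X) := by
    rw [K.nabla_xi_pre, K.g_sub_right, K.g_sub_right, K.g_smul_right, K.g_smul_right,
      ← K.eta_def Y]
  have h10 := K.c_ann (K.g Y (K.φ X))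
  have h9 := K.skew0 X Y
  rw [K.u_simp X, K.u_simp Y] at h9
  have h11 := K.u_simp X
  have h12 := K.g_symm (K.φ Y) X
  have h13 := K.g_symm Y X
  apply two_cancel
  linear_combination hk + h1 - h3 + h4 - K.η Y * h11 - K.cdef * h7 - K.cdef * h8
    + h10 + h5 + h12 + h9 - 2 * K.cdef * h13

lemma c_zero (hn : 0 < n) : K.cdef = 0 := by
  have hsum : ∑ i, K.cdef * (K.g (K.e i) (K.e i) - K.η (K.e i) * K.η (K.e i)) = 0 := by
    refine Finset.sum_eq_zero fun i _ => K.key_c _ _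
  rw [Finset.sum_congr rfl (fun i _ => mul_sub K.cdef _ _)] at hsum
  rw [Finset.sum_sub_distrib, ← Finset.mul_sum, ← Finset.mul_sum, K.sum_gee,
    K.sum_eta_sq, mul_one] at hsum
  have h2 : algebraMap ℝ C ((2*n : ℕ) : ℝ) * K.cdef = 0 := by
    rw [map_natCast]
    push_cast at hsum ⊢
    linear_combination hsum
  have hne : ((2*n : ℕ) : ℝ) ≠ 0 := by
    simp only [ne_eq, Nat.cast_eq_zero]
    omega
  exact real_cancel hne h2

lemma phi_xi (hn : 0 < n) : K.φ K.ξ = 0 := by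
  rw [K.phi_xi_eq, K.c_zero hn, zero_smul]

lemma u_zero (hn : 0 < n) (X : D) : K.g (K.φ X) K.ξ = 0 := by
  rw [K.u_simp, K.c_zero hn, zero_mul]

lemma eta_phi (hn : 0 < n) (X : D) : K.η (K.φ X) = 0 := by
  rw [K.eta_def]; exact K.u_zero hn X

lemma nabla_xi (hn : 0 < n) (X : D) : K.nabla X K.ξ = X - K.η X • K.ξ := by
  rw [K.nabla_xi_pre, K.c_zero hn, zero_smul, sub_zero]

lemma skew (hn : 0 < n) (X Y : D) : K.g (K.φ X) Y = -K.g X (K.φ Y) := by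
  have h := K.skew0 X Y
  rw [K.u_zero hn, K.u_zero hn] at h
  linear_combination h

lemma eta_nabla (hn : 0 < n) (X Y : D) :
    X (K.η Y) = K.η (K.nabla X Y) + K.g X Y - K.η X * K.η Y := by
  have h := K.eta_nabla_pre X Y
  rw [K.nabla_xi hn, K.g_sub_right, K.g_smul_right, ← K.eta_def Y, K.g_symm Y X] at h
  linear_combination h

end CZero2
section Curv
variable {n : ℕ} {C : Type*} [CommRing C] [Algebra ℝ C] (K : KenmotsuManifold n C)
local notation "D" => Derivation ℝ C C

lemma Rm_eq (X Y Z : D) : K.Rm X Y Z = K.nabla X (K.nabla Y Z) - K.nabla Y (K.nabla X Z)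
    - K.nabla (K.nabla X Y) Z + K.nabla (K.nabla Y X) Z := by
  unfold Rm
  rw [← K.torsion_free, K.nabla_sub_left]
  abel

lemma Rm_antisym (X Y Z : D) : K.Rm X Y Z = -K.Rm Y X Z := by
  simp only [K.Rm_eq]
  abel

lemma Rm_add1 (X X' Y Z : D) : K.Rm (X + X') Y Z = K.Rm X Y Z + K.Rm X' Y Z := by
  simp only [K.Rm_eq, K.nabla_add_left, K.nabla_add_right]
  abel

lemma Rm_smul1 (f : C) (X Y Z : D) : K.Rm (f • X) Y Z = f • K.Rm X Y Z := by
  simp only [K.Rm_eq, K.nabla_smul_left, K.nabla_leibniz, K.nabla_add_left, smul_sub, smul_add]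
  abel

lemma Rm_add2 (X Y Y' Z : D) : K.Rm X (Y + Y') Z = K.Rm X Y Z + K.Rm X Y' Z := by
  rw [K.Rm_antisym, K.Rm_add1, K.Rm_antisym Y X Z, K.Rm_antisym Y' X Z]
  abel

lemma Rm_smul2 (f : C) (X Y Z : D) : K.Rm X (f • Y) Z = f • K.Rm X Y Z := by
  rw [K.Rm_antisym, K.Rm_smul1, K.Rm_antisym X Y Z, smul_neg]

lemma Rm_add3 (X Y Z Z' : D) : K.Rm X Y (Z + Z') = K.Rm X Y Z + K.Rm X Y Z' := by
  simp only [K.Rm_eq, K.nabla_add_right]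
  abel

lemma Rm_smul3 (f : C) (X Y Z : D) : K.Rm X Y (f • Z) = f • K.Rm X Y Z := by
  unfold Rm
  simp only [K.nabla_leibniz, K.nabla_add_right, smul_sub, smul_smul]
  rw [show (⁅X, Y⁆ : D) f = X (Y f) - Y (X f) by simp [Derivation.commutator_apply]]
  rw [sub_smul]
  abel

lemma second_compat (X Y Z W : D) :
    X (Y (K.g Z W)) = K.g (K.nabla X (K.nabla Y Z)) W + K.g (K.nabla Y Z) (K.nabla X W)
      + K.g (K.nabla X Z) (K.nabla Y W) + K.g Z (K.nabla X (K.nabla Y W)) := by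
  have h2 := congrArg X (K.metric_compat Y Z W)
  rw [map_add] at h2
  have h1 := K.metric_compat X (K.nabla Y Z) W
  have h3 := K.metric_compat X Z (K.nabla Y W)
  linear_combination h2 + h1 + h3

lemma g_Rm_antisym (X Y Z W : D) : K.g (K.Rm X Y Z) W = -K.g (K.Rm X Y W) Z := by
  unfold Rm
  rw [K.g_sub_left, K.g_sub_left, K.g_sub_left, K.g_sub_left]
  have a1 := K.second_compat X Y Z W
  have a2 := K.second_compat Y X Z W
  have hbr := K.metric_compat ⁅X, Y⁆ Z W
  have hc : (⁅X, Y⁆ : D) (K.g Z W) = X (Y (K.g Z W)) - Y (X (K.g Z W)) := by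
    simp [Derivation.commutator_apply]
  have s1 := K.g_symm Z (K.nabla X (K.nabla Y W))
  have s2 := K.g_symm Z (K.nabla Y (K.nabla X W))
  have s3 := K.g_symm Z (K.nabla ⁅X, Y⁆ W)
  have s4 := K.g_symm (K.nabla Y Z) (K.nabla X W)
  have s5 := K.g_symm (K.nabla X Z) (K.nabla Y W)
  linear_combination -a1 + a2 - hc + hbr - s1 + s2 + s3

lemma bianchi1 (X Y Z : D) : K.Rm X Y Z + K.Rm Y Z X + K.Rm Z X Y = 0 := by
  have j : ⁅X, ⁅Y, Z⁆⁆ + ⁅Y, ⁅Z, X⁆⁆ + ⁅Z, ⁅X, Y⁆⁆ = (0 : D) := lie_jacobi X Y Z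
  rw [← K.torsion_free X ⁅Y, Z⁆, ← K.torsion_free Y ⁅Z, X⁆, ← K.torsion_free Z ⁅X, Y⁆] at j
  rw [← K.torsion_free Y Z, ← K.torsion_free Z X, ← K.torsion_free X Y] at j
  simp only [K.nabla_sub_right, K.nabla_sub_left] at j
  unfold Rm
  rw [← K.torsion_free X Y, ← K.torsion_free Y Z, ← K.torsion_free Z X]
  simp only [K.nabla_sub_left]
  rw [← j]
  abel

lemma bianchi1_g (X Y Z W : D) :
    K.g (K.Rm X Y Z) W + K.g (K.Rm Y Z X) W + K.g (K.Rm Z X Y) W = 0 := by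
  have h := congrArg (fun T : Derivation ℝ C C => K.g T W) (K.bianchi1 X Y Z)
  rw [K.g_add_left, K.g_add_left, K.g_zero_left] at h
  exact h

lemma g_Rm_antisym12 (X Y Z W : D) : K.g (K.Rm X Y Z) W = -K.g (K.Rm Y X Z) W := by
  rw [K.Rm_antisym, K.g_neg_left]

lemma pair_symm (X Y Z W : D) : K.g (K.Rm X Y Z) W = K.g (K.Rm Z W X) Y := by
  -- with a := Y, b := Z, c := X, d := W
  have B1 := K.bianchi1_g Y Z X W
  have B2 := K.bianchi1_g Z X W Y
  have B3 := K.bianchi1_g X W Y Z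
  have B4 := K.bianchi1_g W Y Z X
  have p1 := K.g_Rm_antisym Y Z X W
  have p2 := K.g_Rm_antisym Z X Y W
  have p3 := K.g_Rm_antisym X W Z Y
  have p4 := K.g_Rm_antisym W Y X Z
  have q1 := K.g_Rm_antisym12 Y X W Z
  have q2 := K.g_Rm_antisym X Y W Z
  have q3 := K.g_Rm_antisym12 Z W Y X
  have q4 := K.g_Rm_antisym W Z Y X
  have q5 := K.g_Rm_antisym12 Z W X Y
  have h2 : (K.g (K.Rm X Y Z) W - K.g (K.Rm Z W X) Y)
      + (K.g (K.Rm X Y Z) W - K.g (K.Rm Z W X) Y) = 0 := by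
    linear_combination B1 + B2 + B3 + B4 - p1 - p2 - p3 - p4
      - q1 + q2 - q3 + q4 - 2 * q5
  have h3 := two_cancel h2
  linear_combination h3

end Curv
section Trace
variable {n : ℕ} {C : Type*} [CommRing C] [Algebra ℝ C] (K : KenmotsuManifold n C)
local notation "D" => Derivation ℝ C C

lemma Rm_zero1 (Y Z : D) : K.Rm 0 Y Z = 0 := by
  have h := K.Rm_add1 0 0 Y Z
  simpa using h.symm

lemma Rm_zero2 (Y Z : D) : K.Rm Y 0 Z = 0 := by
  have h := K.Rm_add2 Y 0 0 Z
  simpa using h.symm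

lemma Rm_zero3 (Y Z : D) : K.Rm Y Z 0 = 0 := by
  have h := K.Rm_add3 Y Z 0 0
  simpa using h.symm

lemma Rm_sum1 {ι : Type*} (s : Finset ι) (v : ι → C) (w : ι → D) (Y Z : D) :
    K.Rm (∑ i ∈ s, v i • w i) Y Z = ∑ i ∈ s, v i • K.Rm (w i) Y Z := by
  classical
  induction s using Finset.induction_on with
  | empty => simpa using K.Rm_zero1 Y Z
  | insert _ _ h ih =>
    rw [Finset.sum_insert h, K.Rm_add1, K.Rm_smul1, ih, Finset.sum_insert h]

lemma Rm_sum2 {ι : Type*} (s : Finset ι) (v : ι → C) (w : ι → D) (Y Z : D) :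
    K.Rm Y (∑ i ∈ s, v i • w i) Z = ∑ i ∈ s, v i • K.Rm Y (w i) Z := by
  classical
  induction s using Finset.induction_on with
  | empty => simpa using K.Rm_zero2 Y Z
  | insert _ _ h ih =>
    rw [Finset.sum_insert h, K.Rm_add2, K.Rm_smul2, ih, Finset.sum_insert h]

lemma Rm_sum3 {ι : Type*} (s : Finset ι) (v : ι → C) (w : ι → D) (Y Z : D) :
    K.Rm Y Z (∑ i ∈ s, v i • w i) = ∑ i ∈ s, v i • K.Rm Y Z (w i) := by
  classical
  induction s using Finset.induction_on with
  | empty => simpa using K.Rm_zero3 Y Z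
  | insert _ _ h ih =>
    rw [Finset.sum_insert h, K.Rm_add3, K.Rm_smul3, ih, Finset.sum_insert h]

/-- antisymmetry of connection coefficients in an orthonormal frame -/
lemma omega_antisym (U : D) (i j : Fin (2*n+1)) :
    K.g (K.nabla U (K.e i)) (K.e j) + K.g (K.nabla U (K.e j)) (K.e i) = 0 := by
  have h := K.metric_compat U (K.e i) (K.e j)
  rw [K.g_frame_apply U i j] at h
  rw [K.g_symm (K.e i) (K.nabla U (K.e j))] at h
  linear_combination -h

/-- summing a bilinear expression against `∇_U e_i` in both slots gives zero -/
lemma frame_cancel (U : D) (B : D → D → C)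
    (hL : ∀ (v : Fin (2*n+1) → C) (Y : D),
      B (∑ i, v i • K.e i) Y = ∑ i, v i * B (K.e i) Y)
    (hR : ∀ (v : Fin (2*n+1) → C) (Y : D),
      B Y (∑ i, v i • K.e i) = ∑ i, v i * B Y (K.e i)) :
    ∑ i, (B (K.nabla U (K.e i)) (K.e i) + B (K.e i) (K.nabla U (K.e i))) = 0 := by
  have hexp : ∀ i : Fin (2*n+1),
      B (K.nabla U (K.e i)) (K.e i) + B (K.e i) (K.nabla U (K.e i))
      = ∑ j, K.g (K.nabla U (K.e i)) (K.e j) *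
          (B (K.e j) (K.e i) + B (K.e i) (K.e j)) := by
    intro i
    have hsp := K.frame_span (K.nabla U (K.e i))
    calc B (K.nabla U (K.e i)) (K.e i) + B (K.e i) (K.nabla U (K.e i))
        = B (∑ j, K.g (K.nabla U (K.e i)) (K.e j) • K.e j) (K.e i)
          + B (K.e i) (∑ j, K.g (K.nabla U (K.e i)) (K.e j) • K.e j) := by rw [← hsp]
      _ = ∑ j, K.g (K.nabla U (K.e i)) (K.e j) * B (K.e j) (K.e i)
          + ∑ j, K.g (K.nabla U (K.e i)) (K.e j) * B (K.e i) (K.e j) := by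
            rw [hL, hR]
      _ = ∑ j, K.g (K.nabla U (K.e i)) (K.e j) *
          (B (K.e j) (K.e i) + B (K.e i) (K.e j)) := by
            rw [← Finset.sum_add_distrib]
            exact Finset.sum_congr rfl fun j _ => by ring
  rw [Finset.sum_congr rfl fun i _ => hexp i]
  set T := ∑ i, ∑ j, K.g (K.nabla U (K.e i)) (K.e j) *
      (B (K.e j) (K.e i) + B (K.e i) (K.e j)) with hT
  have hTT : T + T = 0 := by
    nth_rewrite 2 [hT]
    rw [Finset.sum_comm]
    rw [hT, ← Finset.sum_add_distrib]
    refine Finset.sum_eq_zero fun i _ => ?_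
    rw [← Finset.sum_add_distrib]
    refine Finset.sum_eq_zero fun j _ => ?_
    have h := K.omega_antisym U i j
    linear_combination (B (K.e j) (K.e i) + B (K.e i) (K.e j)) * h
  exact two_cancel hTT

/-- moving `φ` across the trace index -/
lemma trace_move (hn : 0 < n) (T : D → D → C)
    (hL : ∀ (v : Fin (2*n+1) → C) (Y : D),
      T (∑ i, v i • K.e i) Y = ∑ i, v i * T (K.e i) Y)
    (hR : ∀ (v : Fin (2*n+1) → C) (Y : D),
      T Y (∑ i, v i • K.e i) = ∑ i, v i * T Y (K.e i)) :
    ∑ i, T (K.φ (K.e i)) (K.e i) = -∑ i, T (K.e i) (K.φ (K.e i)) := by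
  have h1 : ∀ i : Fin (2*n+1), T (K.φ (K.e i)) (K.e i)
      = ∑ j, K.g (K.φ (K.e i)) (K.e j) * T (K.e j) (K.e i) := by
    intro i
    conv_lhs => rw [K.frame_span (K.φ (K.e i))]
    rw [hL]
  have h2 : ∀ j : Fin (2*n+1), T (K.e j) (K.φ (K.e j))
      = ∑ i, K.g (K.φ (K.e j)) (K.e i) * T (K.e j) (K.e i) := by
    intro j
    conv_lhs => rw [K.frame_span (K.φ (K.e j))]
    rw [hR]
  rw [Finset.sum_congr rfl fun i _ => h1 i, Finset.sum_congr rfl fun j _ => h2 j]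
  rw [Finset.sum_comm, ← Finset.sum_neg_distrib]
  refine Finset.sum_congr rfl fun j _ => ?_
  rw [← Finset.sum_neg_distrib]
  refine Finset.sum_congr rfl fun i _ => ?_
  have hs : K.g (K.φ (K.e i)) (K.e j) = -K.g (K.φ (K.e j)) (K.e i) := by
    rw [K.skew hn, K.g_symm (K.e i) (K.φ (K.e j))]
  rw [hs]
  ring

lemma Rm_xi (hn : 0 < n) (X Y : D) :
    K.Rm X Y K.ξ = K.η X • Y - K.η Y • X := by
  unfold Rm
  rw [K.nabla_xi hn Y, K.nabla_xi hn X, K.nabla_xi hn ⁅X, Y⁆]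
  rw [K.nabla_sub_right, K.nabla_sub_right, K.nabla_leibniz, K.nabla_leibniz,
    K.nabla_xi hn X, K.nabla_xi hn Y]
  have heta : K.η ⁅X, Y⁆ = X (K.η Y) - Y (K.η X) := by
    rw [← K.torsion_free, K.eta_sub, K.eta_nabla hn X Y, K.eta_nabla hn Y X,
      K.g_symm Y X]
    ring
  rw [heta, ← K.torsion_free, sub_smul]
  rw [smul_sub, smul_sub, smul_smul, smul_smul, mul_comm (K.η Y) (K.η X)]
  abel

lemma S_xi (hn : 0 < n) (X : D) :
    K.S X K.ξ = -(((2*n : ℕ) : C) * K.η X) := by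
  unfold S
  have h : ∀ i : Fin (2*n+1), K.g (K.Rm (K.e i) X K.ξ) (K.e i)
      = K.η (K.e i) * K.g (K.e i) X - K.η X * K.g (K.e i) (K.e i) := by
    intro i
    rw [K.Rm_xi hn, K.g_sub_left, K.g_smul_left, K.g_smul_left, K.g_symm X (K.e i)]
  rw [Finset.sum_congr rfl fun i _ => h i, Finset.sum_sub_distrib, K.sum_eta_g,
    ← Finset.mul_sum, K.sum_gee]
  push_cast
  ring

lemma S_symm (X Y : D) : K.S X Y = K.S Y X := by
  unfold S
  refine Finset.sum_congr rfl fun i _ => ?_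
  have h1 := K.pair_symm (K.e i) X Y (K.e i)
  have h2 := K.g_Rm_antisym12 Y (K.e i) (K.e i) X
  have h3 := K.g_Rm_antisym (K.e i) Y (K.e i) X
  linear_combination h1 + h2 - h3

lemma S_xi2 (hn : 0 < n) (X : D) :
    K.S K.ξ X = -(((2*n : ℕ) : C) * K.η X) := by
  rw [K.S_symm, K.S_xi hn]

lemma S_alt (V Y : D) : ∑ j, K.g (K.Rm Y (K.e j) (K.e j)) V = K.S V Y := by
  unfold S
  refine Finset.sum_congr rfl fun j _ => ?_
  exact K.pair_symm Y (K.e j) (K.e j) V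

end Trace
section Dagger
variable {n : ℕ} {C : Type*} [CommRing C] [Algebra ℝ C] (K : KenmotsuManifold n C)
local notation "D" => Derivation ℝ C C

/-- derivative of the fundamental 2-form-like tensor `g(φ·,·)` -/
lemma hD (X Z W : D) : X (K.g (K.φ Z) W)
    = K.g (K.φ (K.nabla X Z)) W + K.g (K.φ Z) (K.nabla X W)
      + K.g (K.φ X) Z * K.η W - K.η Z * K.g (K.φ X) W := by
  have hm := K.metric_compat X (K.φ Z) W
  have hk := congrArg (fun T : Derivation ℝ C C => K.g T W) (K.kenmotsu X Z)
  rw [K.g_sub_left, K.g_sub_left, K.g_smul_left, K.g_smul_left,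
    K.g_symm K.ξ W, ← K.eta_def W] at hk
  linear_combination hm + hk

lemma dagger_g (hn : 0 < n) (X Y Z W : D) : K.g (K.Rm X Y (K.φ Z)) W
    = K.g (K.φ (K.Rm X Y Z)) W + K.g (K.φ Y) Z * K.g X W - K.g (K.φ X) Z * K.g Y W
      + K.g Y Z * K.g (K.φ X) W - K.g X Z * K.g (K.φ Y) W := by
  have hXY := congrArg X (K.hD Y Z W)
  simp only [map_add, map_sub] at hXY
  rw [deriv_mul, deriv_mul] at hXY
  rw [K.hD X (K.nabla Y Z) W, K.hD X Z (K.nabla Y W), K.hD X Y Z, K.hD X Y W] at hXY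
  have hYX := congrArg Y (K.hD X Z W)
  simp only [map_add, map_sub] at hYX
  rw [deriv_mul, deriv_mul] at hYX
  rw [K.hD Y (K.nabla X Z) W, K.hD Y Z (K.nabla X W), K.hD Y X Z, K.hD Y X W] at hYX
  have hbr := K.hD ⁅X, Y⁆ Z W
  have hc : (⁅X, Y⁆ : D) (K.g (K.φ Z) W) = X (Y (K.g (K.φ Z) W)) - Y (X (K.g (K.φ Z) W)) := by
    simp [Derivation.commutator_apply]
  have c1 : K.g (K.φ ⁅X, Y⁆) Z = K.g (K.φ (K.nabla X Y)) Z - K.g (K.φ (K.nabla Y X)) Z := by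
    rw [← K.torsion_free, K.phi_sub, K.g_sub_left]
  have c2 : K.g (K.φ ⁅X, Y⁆) W = K.g (K.φ (K.nabla X Y)) W - K.g (K.φ (K.nabla Y X)) W := by
    rw [← K.torsion_free, K.phi_sub, K.g_sub_left]
  have d1 : K.g (K.φ (K.Rm X Y Z)) W = K.g (K.φ (K.nabla X (K.nabla Y Z))) W
      - K.g (K.φ (K.nabla Y (K.nabla X Z))) W - K.g (K.φ (K.nabla ⁅X, Y⁆ Z)) W := by
    unfold Rm
    rw [K.phi_sub, K.phi_sub, K.g_sub_left, K.g_sub_left]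
  have d2 : K.g (K.φ Z) (K.Rm X Y W) = K.g (K.φ Z) (K.nabla X (K.nabla Y W))
      - K.g (K.φ Z) (K.nabla Y (K.nabla X W)) - K.g (K.φ Z) (K.nabla ⁅X, Y⁆ W) := by
    unfold Rm
    rw [K.g_sub_right, K.g_sub_right]
  have d3 : K.g (K.φ Z) (K.Rm X Y W) = -K.g (K.Rm X Y (K.φ Z)) W := by
    rw [K.g_symm, K.g_Rm_antisym X Y W (K.φ Z)]
  have u3 := K.eta_nabla hn X W
  have u4 := K.eta_nabla hn Y W
  have u5 := K.eta_nabla hn X Z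
  have u6 := K.eta_nabla hn Y Z
  linear_combination hXY - hYX - hbr + hc - K.η W * c1 + K.η Z * c2 - d1 - d2 + d3
    + K.g (K.φ Y) Z * u3 - K.g (K.φ X) Z * u4 - K.g (K.φ Y) W * u5 + K.g (K.φ X) W * u6

end Dagger
section SstarSec
variable {n : ℕ} {C : Type*} [CommRing C] [Algebra ℝ C] (K : KenmotsuManifold n C)
local notation "D" => Derivation ℝ C C

lemma g_phi_diag (hn : 0 < n) (X : D) : K.g (K.φ X) X = 0 := by
  have h := K.skew hn X X
  rw [K.g_symm X (K.φ X)] at h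
  exact two_cancel (by linear_combination h)

lemma sstar_term (hn : 0 < n) (X Y : D) (i : Fin (2*n+1)) :
    K.g (K.Rm (K.e i) X (K.φ (K.e i))) (K.φ Y)
    = -K.g (K.Rm (K.e i) X Y) (K.e i) + K.g (K.φ X) (K.e i) * K.g (K.e i) (K.φ Y)
      + K.g X (K.e i) * K.g (K.e i) Y - K.g X Y * K.g (K.e i) (K.e i) := by
  have hdag := K.dagger_g hn (K.e i) X (K.e i) (K.φ Y)
  have hcompat := K.compat_phi (K.Rm (K.e i) X (K.e i)) Y
  have ha := K.g_Rm_antisym (K.e i) X (K.e i) Y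
  have he1 := K.eta_def (K.Rm (K.e i) X (K.e i))
  have he2 := K.g_Rm_antisym (K.e i) X (K.e i) K.ξ
  have hb1 : K.g (K.Rm (K.e i) X K.ξ) (K.e i)
      = K.η (K.e i) * K.g X (K.e i) - K.η X * K.g (K.e i) (K.e i) := by
    rw [K.Rm_xi hn, K.g_sub_left, K.g_smul_left, K.g_smul_left]
  have hgd := K.g_phi_diag hn (K.e i)
  have hc2 := K.compat_phi (K.e i) Y
  have hcXY := K.compat_phi X Y
  have hs : K.η (K.e i) * K.g X (K.e i) = K.η (K.e i) * K.g (K.e i) X := by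
    rw [K.g_symm X (K.e i)]
  linear_combination hdag + hcompat + ha - K.η Y * he1 - K.η Y * he2 + K.η Y * hb1
    - K.g X (K.φ Y) * hgd + K.g X (K.e i) * hc2 - K.g (K.e i) (K.e i) * hcXY

lemma sstar_m (hn : 0 < n) (X Y : D) :
    ∑ i, K.g (K.Rm (K.e i) X (K.φ (K.e i))) (K.φ Y)
    = -K.S X Y - (((2*n : ℕ) : C) - 1) * K.g X Y - K.η X * K.η Y := by
  rw [Finset.sum_congr rfl fun i _ => K.sstar_term hn X Y i]
  rw [Finset.sum_sub_distrib, Finset.sum_add_distrib, Finset.sum_add_distrib,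
    Finset.sum_neg_distrib]
  rw [K.sum_g_mul (K.φ X) (K.φ Y), K.sum_g_mul X Y, ← Finset.mul_sum, K.sum_gee]
  have hS : ∑ i, K.g (K.Rm (K.e i) X Y) (K.e i) = K.S X Y := rfl
  rw [hS, K.compat_phi X Y]
  push_cast
  ring

lemma sstar_sum (hn : 0 < n) (X Y : D) :
    ∑ i, K.g (K.Rm X (K.φ Y) (K.φ (K.e i))) (K.e i)
    = -(∑ i, K.g (K.Rm (K.e i) X (K.φ (K.e i))) (K.φ Y))
      - ∑ i, K.g (K.Rm (K.e i) X (K.φ (K.e i))) (K.φ Y) := by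
  have h12 : ∀ i : Fin (2*n+1), K.g (K.Rm X (K.φ Y) (K.φ (K.e i))) (K.e i)
      = -K.g (K.Rm (K.e i) X (K.φ (K.e i))) (K.φ Y)
        - K.g (K.Rm X (K.φ (K.e i)) (K.e i)) (K.φ Y) := by
    intro i
    have h1 := K.pair_symm X (K.φ Y) (K.φ (K.e i)) (K.e i)
    have h2 := K.bianchi1_g (K.φ (K.e i)) (K.e i) X (K.φ Y)
    linear_combination h1 + h2
  rw [Finset.sum_congr rfl fun i _ => h12 i, Finset.sum_sub_distrib,
    Finset.sum_neg_distrib]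
  have htm : ∑ i, K.g (K.Rm X (K.φ (K.e i)) (K.e i)) (K.φ Y)
      = -∑ i, K.g (K.Rm X (K.e i) (K.φ (K.e i))) (K.φ Y) := by
    refine K.trace_move hn (fun U V => K.g (K.Rm X U V) (K.φ Y)) ?_ ?_
    · intro v V
      rw [K.Rm_sum2, K.g_sum_left]
      exact Finset.sum_congr rfl fun i _ => by rw [K.g_smul_left]
    · intro v V
      rw [K.Rm_sum3, K.g_sum_left]
      exact Finset.sum_congr rfl fun i _ => by rw [K.g_smul_left]
  rw [htm]
  have h3 : ∀ i : Fin (2*n+1), K.g (K.Rm X (K.e i) (K.φ (K.e i))) (K.φ Y)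
      = -K.g (K.Rm (K.e i) X (K.φ (K.e i))) (K.φ Y) := fun i =>
    K.g_Rm_antisym12 X (K.e i) (K.φ (K.e i)) (K.φ Y)
  rw [Finset.sum_congr rfl fun i _ => h3 i, Finset.sum_neg_distrib]
  ring

lemma Sstar_eq (hn : 0 < n) (X Y : D) :
    K.Sstar X Y = K.S X Y + (((2*n : ℕ) : C) - 1) * K.g X Y + K.η X * K.η Y := by
  unfold Sstar
  rw [K.sstar_sum hn, K.sstar_m hn]
  set v := K.S X Y + (((2*n : ℕ) : C) - 1) * K.g X Y + K.η X * K.η Y with hv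
  have : -(-K.S X Y - (((2*n : ℕ) : C) - 1) * K.g X Y - K.η X * K.η Y)
      - (-K.S X Y - (((2*n : ℕ) : C) - 1) * K.g X Y - K.η X * K.η Y) = v + v := by
    rw [hv]; ring
  rw [this, ← two_smul ℝ v, smul_smul]
  norm_num

end SstarSec
section Bianchi2
variable {n : ℕ} {C : Type*} [CommRing C] [Algebra ℝ C] (K : KenmotsuManifold n C)
local notation "D" => Derivation ℝ C C

/-- covariant derivative of the Ricci tensor (scalar form) -/
def nablaS (U X Y : D) : C :=
  U (K.S X Y) - K.S (K.nabla U X) Y - K.S X (K.nabla U Y)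

/-- covariant derivative of the curvature tensor -/
def nablaR (U X Y Z : D) : D :=
  K.nabla U (K.Rm X Y Z) - K.Rm (K.nabla U X) Y Z - K.Rm X (K.nabla U Y) Z
    - K.Rm X Y (K.nabla U Z)

lemma S_add1 (X X' Y : D) : K.S (X + X') Y = K.S X Y + K.S X' Y := by
  unfold S
  rw [← Finset.sum_add_distrib]
  exact Finset.sum_congr rfl fun i _ => by rw [K.Rm_add2, K.g_add_left]

lemma S_smul1 (f : C) (X Y : D) : K.S (f • X) Y = f * K.S X Y := by
  unfold S
  rw [Finset.mul_sum]
  exact Finset.sum_congr rfl fun i _ => by rw [K.Rm_smul2, K.g_smul_left]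

lemma S_add2 (X Y Y' : D) : K.S X (Y + Y') = K.S X Y + K.S X Y' := by
  unfold S
  rw [← Finset.sum_add_distrib]
  exact Finset.sum_congr rfl fun i _ => by rw [K.Rm_add3, K.g_add_left]

lemma S_smul2 (f : C) (X Y : D) : K.S X (f • Y) = f * K.S X Y := by
  unfold S
  rw [Finset.mul_sum]
  exact Finset.sum_congr rfl fun i _ => by rw [K.Rm_smul3, K.g_smul_left]

lemma S_sub1 (X X' Y : D) : K.S (X - X') Y = K.S X Y - K.S X' Y := by
  have h := K.S_add1 X' (X - X') Y
  rw [add_sub_cancel] at h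
  linear_combination -h

lemma S_sub2 (X Y Y' : D) : K.S X (Y - Y') = K.S X Y - K.S X Y' := by
  have h := K.S_add2 X Y' (Y - Y')
  rw [add_sub_cancel] at h
  linear_combination -h

lemma S_sum1 (v : Fin (2*n+1) → C) (Y : D) :
    K.S (∑ i, v i • K.e i) Y = ∑ i, v i * K.S (K.e i) Y := by
  classical
  induction (Finset.univ : Finset (Fin (2*n+1))) using Finset.induction_on with
  | empty => simp [show K.S 0 Y = 0 by
      have := K.S_smul1 0 0 Y; simpa using this]
  | insert _ _ h ih => rw [Finset.sum_insert h, Finset.sum_insert h, K.S_add1, K.S_smul1, ih]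

lemma S_sum2 (v : Fin (2*n+1) → C) (Y : D) :
    K.S Y (∑ i, v i • K.e i) = ∑ i, v i * K.S Y (K.e i) := by
  classical
  induction (Finset.univ : Finset (Fin (2*n+1))) using Finset.induction_on with
  | empty => simp [show K.S Y 0 = 0 by
      have := K.S_smul2 0 Y 0; simpa using this]
  | insert _ _ h ih => rw [Finset.sum_insert h, Finset.sum_insert h, K.S_add2, K.S_smul2, ih]

lemma eta_sum (v : Fin (2*n+1) → C) :
    K.η (∑ i, v i • K.e i) = ∑ i, v i * K.η (K.e i) := by
  rw [K.eta_def, K.g_sum_left]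
  exact Finset.sum_congr rfl fun i _ => by rw [K.g_smul_left, K.eta_def]

lemma nablaS_symm (U X Y : D) : K.nablaS U X Y = K.nablaS U Y X := by
  unfold nablaS
  rw [K.S_symm X Y, K.S_symm (K.nabla U X) Y, K.S_symm X (K.nabla U Y)]
  ring

lemma nablaS_xi (hn : 0 < n) (U Y : D) :
    K.nablaS U Y K.ξ = -K.S Y U - ((2*n : ℕ) : C) * K.g U Y := by
  unfold nablaS
  rw [K.S_xi hn Y, K.nabla_xi hn U, K.S_sub2 Y U, K.S_smul2, K.S_xi hn Y, K.S_xi hn]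
  have hc0 : U (((2*n : ℕ) : C)) = 0 := by
    have hcast : ((2*n:ℕ):C) = algebraMap ℝ C ((2*n:ℕ):ℝ) := by rw [map_natCast]
    rw [hcast, Derivation.map_algebraMap]
  have hd : U (-(((2*n:ℕ):C) * K.η Y)) = -(((2*n:ℕ):C) * U (K.η Y)) := by
    rw [map_neg, deriv_mul, hc0, mul_zero, add_zero]
  rw [hd, K.eta_nabla hn U Y]
  ring

lemma bianchi2 (X Y Z W : D) :
    K.nablaR X Y Z W + K.nablaR Y Z X W + K.nablaR Z X Y W = 0 := by
  have j : ⁅X, ⁅Y, Z⁆⁆ + ⁅Y, ⁅Z, X⁆⁆ + ⁅Z, ⁅X, Y⁆⁆ = (0 : D) := lie_jacobi X Y Z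
  have j' : ⁅⁅Y, Z⁆, X⁆ + ⁅⁅Z, X⁆, Y⁆ + ⁅⁅X, Y⁆, Z⁆ = (0 : D) := by
    rw [← lie_skew ⁅Y, Z⁆ X, ← lie_skew ⁅Z, X⁆ Y, ← lie_skew ⁅X, Y⁆ Z,
      ← neg_add, ← neg_add, neg_eq_zero]
    exact j
  have j2 : K.nabla ⁅⁅Y, Z⁆, X⁆ W + K.nabla ⁅⁅Z, X⁆, Y⁆ W + K.nabla ⁅⁅X, Y⁆, Z⁆ W
      = 0 := by
    rw [← K.nabla_add_left, ← K.nabla_add_left, j', K.nabla_zero_left]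
  unfold nablaR Rm
  simp only [← K.torsion_free] at j2 ⊢
  simp only [K.nabla_sub_left, K.nabla_sub_right] at j2 ⊢
  rw [← j2]
  abel

lemma nablaR_anti (U A B W : D) : K.nablaR U A B W = -K.nablaR U B A W := by
  unfold nablaR
  rw [K.Rm_antisym A B W, K.Rm_antisym (K.nabla U A) B W,
    K.Rm_antisym A (K.nabla U B) W, K.Rm_antisym A B (K.nabla U W), K.nabla_neg_right]
  abel

lemma traceS_nablaR (U A Z : D) :
    ∑ i, K.g (K.nablaR U (K.e i) A Z) (K.e i) = K.nablaS U A Z := by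
  have hU : U (K.S A Z) = ∑ i, (K.g (K.nabla U (K.Rm (K.e i) A Z)) (K.e i)
      + K.g (K.Rm (K.e i) A Z) (K.nabla U (K.e i))) := by
    unfold S
    rw [map_sum]
    exact Finset.sum_congr rfl fun i _ => K.metric_compat U (K.Rm (K.e i) A Z) (K.e i)
  have hL1 : ∀ (v : Fin (2*n+1) → C) (Y : D),
      K.g (K.Rm (∑ i, v i • K.e i) A Z) Y = ∑ i, v i * K.g (K.Rm (K.e i) A Z) Y := by
    intro v Y
    rw [K.Rm_sum1, K.g_sum_left]
    exact Finset.sum_congr rfl fun i _ => by rw [K.g_smul_left]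
  have hR1 : ∀ (v : Fin (2*n+1) → C) (Y : D),
      K.g (K.Rm Y A Z) (∑ i, v i • K.e i) = ∑ i, v i * K.g (K.Rm Y A Z) (K.e i) := by
    intro v Y
    rw [K.g_sum_right]
    exact Finset.sum_congr rfl fun i _ => by rw [K.g_smul_right]
  have hfc := K.frame_cancel U (fun P Q => K.g (K.Rm P A Z) Q) hL1 hR1
  unfold nablaS nablaR
  have hsplit : ∀ i : Fin (2*n+1),
      K.g (K.nabla U (K.Rm (K.e i) A Z) - K.Rm (K.nabla U (K.e i)) A Z
        - K.Rm (K.e i) (K.nabla U A) Z - K.Rm (K.e i) A (K.nabla U Z)) (K.e i)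
      = K.g (K.nabla U (K.Rm (K.e i) A Z)) (K.e i)
        - K.g (K.Rm (K.nabla U (K.e i)) A Z) (K.e i)
        - K.g (K.Rm (K.e i) (K.nabla U A) Z) (K.e i)
        - K.g (K.Rm (K.e i) A (K.nabla U Z)) (K.e i) := by
    intro i
    rw [K.g_sub_left, K.g_sub_left, K.g_sub_left]
  rw [Finset.sum_congr rfl fun i _ => hsplit i]
  simp only [Finset.sum_sub_distrib]
  have hS1 : ∑ i, K.g (K.Rm (K.e i) (K.nabla U A) Z) (K.e i) = K.S (K.nabla U A) Z := rfl
  have hS2 : ∑ i, K.g (K.Rm (K.e i) A (K.nabla U Z)) (K.e i) = K.S A (K.nabla U Z) := rfl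
  rw [hS1, hS2]
  rw [Finset.sum_add_distrib] at hU
  rw [Finset.sum_add_distrib] at hfc
  linear_combination -hU - hfc

lemma traceS_nablaR2 (U Y V : D) :
    ∑ j, K.g (K.nablaR U Y (K.e j) (K.e j)) V = K.nablaS U V Y := by
  have hU : U (K.S V Y) = ∑ j, (K.g (K.nabla U (K.Rm Y (K.e j) (K.e j))) V
      + K.g (K.Rm Y (K.e j) (K.e j)) (K.nabla U V)) := by
    rw [← K.S_alt V Y, map_sum]
    exact Finset.sum_congr rfl fun j _ => K.metric_compat U (K.Rm Y (K.e j) (K.e j)) V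
  have hL1 : ∀ (v : Fin (2*n+1) → C) (W : D),
      K.g (K.Rm Y (∑ i, v i • K.e i) W) V = ∑ i, v i * K.g (K.Rm Y (K.e i) W) V := by
    intro v W
    rw [K.Rm_sum2, K.g_sum_left]
    exact Finset.sum_congr rfl fun i _ => by rw [K.g_smul_left]
  have hR1 : ∀ (v : Fin (2*n+1) → C) (W : D),
      K.g (K.Rm Y W (∑ i, v i • K.e i)) V = ∑ i, v i * K.g (K.Rm Y W (K.e i)) V := by
    intro v W
    rw [K.Rm_sum3, K.g_sum_left]
    exact Finset.sum_congr rfl fun i _ => by rw [K.g_smul_left]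
  have hfc := K.frame_cancel U (fun P Q => K.g (K.Rm Y P Q) V) hL1 hR1
  unfold nablaS nablaR
  have hsplit : ∀ j : Fin (2*n+1),
      K.g (K.nabla U (K.Rm Y (K.e j) (K.e j)) - K.Rm (K.nabla U Y) (K.e j) (K.e j)
        - K.Rm Y (K.nabla U (K.e j)) (K.e j) - K.Rm Y (K.e j) (K.nabla U (K.e j))) V
      = K.g (K.nabla U (K.Rm Y (K.e j) (K.e j))) V
        - K.g (K.Rm (K.nabla U Y) (K.e j) (K.e j)) V
        - K.g (K.Rm Y (K.nabla U (K.e j)) (K.e j)) V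
        - K.g (K.Rm Y (K.e j) (K.nabla U (K.e j))) V := by
    intro j
    rw [K.g_sub_left, K.g_sub_left, K.g_sub_left]
  rw [Finset.sum_congr rfl fun j _ => hsplit j]
  simp only [Finset.sum_sub_distrib]
  rw [K.S_alt V (K.nabla U Y)]
  rw [Finset.sum_add_distrib, K.S_alt (K.nabla U V) Y] at hU
  rw [Finset.sum_add_distrib] at hfc
  linear_combination -hU - hfc

lemma trace_nablaS (U : D) : ∑ j, K.nablaS U (K.e j) (K.e j) = U K.r := by
  unfold nablaS
  have hfc := K.frame_cancel U (fun P Q => K.S P Q)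
    (fun v Y => K.S_sum1 v Y) (fun v Y => K.S_sum2 v Y)
  have hU : U K.r = ∑ j, U (K.S (K.e j) (K.e j)) := by
    unfold r; rw [map_sum]
  simp only [Finset.sum_sub_distrib]
  rw [Finset.sum_add_distrib] at hfc
  linear_combination -hU - hfc

lemma CB1 (X Y Z : D) :
    ∑ i, K.g (K.nablaR (K.e i) X Y Z) (K.e i) = K.nablaS X Y Z - K.nablaS Y X Z := by
  have hb : ∀ i : Fin (2*n+1),
      K.g (K.nablaR (K.e i) X Y Z) (K.e i) + K.g (K.nablaR X Y (K.e i) Z) (K.e i)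
        + K.g (K.nablaR Y (K.e i) X Z) (K.e i) = 0 := by
    intro i
    have h := congrArg (fun T : Derivation ℝ C C => K.g T (K.e i))
      (K.bianchi2 (K.e i) X Y Z)
    rw [K.g_add_left, K.g_add_left, K.g_zero_left] at h
    exact h
  have hsum : ∑ i, (K.g (K.nablaR (K.e i) X Y Z) (K.e i)
      + K.g (K.nablaR X Y (K.e i) Z) (K.e i)
      + K.g (K.nablaR Y (K.e i) X Z) (K.e i)) = 0 :=
    Finset.sum_eq_zero fun i _ => hb i
  rw [Finset.sum_add_distrib, Finset.sum_add_distrib] at hsum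
  have h2 : ∑ i, K.g (K.nablaR X Y (K.e i) Z) (K.e i) = -K.nablaS X Y Z := by
    rw [← K.traceS_nablaR X Y Z, ← Finset.sum_neg_distrib]
    exact Finset.sum_congr rfl fun i _ => by rw [K.nablaR_anti X Y (K.e i) Z, K.g_neg_left]
  have h3 : ∑ i, K.g (K.nablaR Y (K.e i) X Z) (K.e i) = K.nablaS Y X Z :=
    K.traceS_nablaR Y X Z
  rw [h2, h3] at hsum
  linear_combination hsum

lemma CB2 (Y : D) :
    (∑ i, K.nablaS (K.e i) (K.e i) Y) + ∑ i, K.nablaS (K.e i) (K.e i) Y = Y K.r := by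
  have h1 : ∀ j : Fin (2*n+1), ∑ i, K.g (K.nablaR (K.e i) Y (K.e j) (K.e j)) (K.e i)
      = K.nablaS Y (K.e j) (K.e j) - K.nablaS (K.e j) Y (K.e j) := fun j =>
    K.CB1 Y (K.e j) (K.e j)
  have h2 : ∑ j, ∑ i, K.g (K.nablaR (K.e i) Y (K.e j) (K.e j)) (K.e i)
      = ∑ i, K.nablaS (K.e i) (K.e i) Y := by
    rw [Finset.sum_comm]
    exact Finset.sum_congr rfl fun i _ => K.traceS_nablaR2 (K.e i) Y (K.e i)
  rw [Finset.sum_congr rfl fun j _ => h1 j, Finset.sum_sub_distrib] at h2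
  rw [K.trace_nablaS Y] at h2
  have h3 : ∑ j, K.nablaS (K.e j) Y (K.e j) = ∑ j, K.nablaS (K.e j) (K.e j) Y :=
    Finset.sum_congr rfl fun j _ => K.nablaS_symm (K.e j) Y (K.e j)
  rw [h3] at h2
  linear_combination -h2

lemma xi_r (hn : 0 < n) :
    K.ξ K.r = -(2 * K.r) - 2 * ((2*n : ℕ) : C) * ((2*n+1 : ℕ) : C) := by
  have h := K.CB2 K.ξ
  have h2 : ∀ i : Fin (2*n+1), K.nablaS (K.e i) (K.e i) K.ξ
      = -K.S (K.e i) (K.e i) - ((2*n : ℕ) : C) * K.g (K.e i) (K.e i) :=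
    fun i => K.nablaS_xi hn (K.e i) (K.e i)
  rw [Finset.sum_congr rfl fun i _ => h2 i, Finset.sum_sub_distrib,
    Finset.sum_neg_distrib, ← Finset.mul_sum, K.sum_gee] at h
  have hr : ∑ i, K.S (K.e i) (K.e i) = K.r := rfl
  rw [hr] at h
  linear_combination -h

end Bianchi2
section Final
variable {n : ℕ} {C : Type*} [CommRing C] [Algebra ℝ C] (K : KenmotsuManifold n C)
local notation "D" => Derivation ℝ C C

lemma soliton_curv (F : D) (TT : D → D → C)
    (hHf : ∀ A B : D, K.g (K.nabla A F) B = -TT A B) (X Y Z : D) :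
    K.g (K.Rm X Y F) Z = -(X (TT Y Z)) + TT Y (K.nabla X Z) + Y (TT X Z)
      - TT X (K.nabla Y Z) + TT ⁅X, Y⁆ Z := by
  have b1 := K.metric_compat X (K.nabla Y F) Z
  rw [hHf Y Z, hHf Y (K.nabla X Z), map_neg] at b1
  have b2 := K.metric_compat Y (K.nabla X F) Z
  rw [hHf X Z, hHf X (K.nabla Y Z), map_neg] at b2
  have b3 := hHf ⁅X, Y⁆ Z
  unfold Rm
  rw [K.g_sub_left, K.g_sub_left]
  linear_combination -b1 + b2 - b3

lemma cast_deriv_zero (U : D) (k : ℕ) : U ((k : ℕ) : C) = 0 := by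
  have hcast : ((k:ℕ):C) = algebraMap ℝ C ((k:ℕ):ℝ) := by rw [map_natCast]
  rw [hcast, Derivation.map_algebraMap]

end Final

open KenmotsuManifold in
theorem stmt15' {n : ℕ} {C : Type*} [CommRing C] [Algebra ℝ C]
    (K : KenmotsuManifold n C) (hn : 0 < n) (f l : C) (F : Derivation ℝ C C)
    (h : K.IsGradAlmostStarRicciSoliton f F l) :
    K.ξ (f + l) = (2 * (n : ℝ))⁻¹ • K.r + algebraMap ℝ C (2 * n + 2) := by
  obtain ⟨hF, hsol⟩ := h
  set N2 : C := ((2*n : ℕ) : C) with hN2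
  set N1 : C := ((2*n+1 : ℕ) : C) with hN1
  set α : C := l + (N2 - 1) with hα
  set TT : Derivation ℝ C C → Derivation ℝ C C → C :=
    fun A B => K.S A B + α * K.g A B + K.η A * K.η B with hTT
  have hTTd : ∀ A B, TT A B = K.S A B + α * K.g A B + K.η A * K.η B := fun A B => rfl
  have hHf : ∀ A B, K.g (K.nabla A F) B = -TT A B := by
    intro A B
    have hs := hsol A B
    rw [K.Sstar_eq hn A B] at hs
    rw [hTTd, hα]
    linear_combination hs
  have hTxi : ∀ V : Derivation ℝ C C, TT K.ξ V = l * K.η V := by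
    intro V
    rw [hTTd, K.S_xi2 hn V, K.eta_xi, one_mul, K.g_symm K.ξ V, ← K.eta_def V, hα, hN2]
    ring
  have hmain : ∀ i : Fin (2*n+1), K.g (K.Rm (K.e i) K.ξ F) (K.e i)
      = -((K.e i) (TT K.ξ (K.e i))) + TT K.ξ (K.nabla (K.e i) (K.e i))
        + K.ξ (TT (K.e i) (K.e i)) - TT (K.e i) (K.nabla K.ξ (K.e i))
        + TT ⁅K.e i, K.ξ⁆ (K.e i) :=
    fun i => K.soliton_curv F TT hHf (K.e i) K.ξ (K.e i)
  -- rewrite each term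
  have hterm : ∀ i : Fin (2*n+1), K.g (K.Rm (K.e i) K.ξ F) (K.e i)
      = (-(l * (K.g (K.e i) (K.e i) - K.η (K.e i) * K.η (K.e i)))
          - K.η (K.e i) * (K.e i) l)
        + K.ξ (TT (K.e i) (K.e i))
        + (TT (K.e i) (K.e i) - l * (K.η (K.e i) * K.η (K.e i))
          - (TT (K.nabla K.ξ (K.e i)) (K.e i) + TT (K.e i) (K.nabla K.ξ (K.e i)))) := by
    intro i
    have h0 := hmain i
    have hb : (⁅K.e i, K.ξ⁆ : Derivation ℝ C C)
        = K.e i - K.η (K.e i) • K.ξ - K.nabla K.ξ (K.e i) := by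
      rw [← K.torsion_free, K.nabla_xi hn]
    have hbr : TT ⁅K.e i, K.ξ⁆ (K.e i) = TT (K.e i) (K.e i)
        - K.η (K.e i) * (l * K.η (K.e i)) - TT (K.nabla K.ξ (K.e i)) (K.e i) := by
      rw [hb, hTTd, hTTd, hTTd, K.S_sub1, K.S_sub1, K.S_smul1, K.g_sub_left,
        K.g_sub_left, K.g_smul_left, K.eta_sub, K.eta_sub, K.eta_smul, K.eta_xi,
        K.S_xi2 hn (K.e i), K.g_symm K.ξ (K.e i), ← K.eta_def (K.e i), ← hN2, hα]
      ring
    have h1 : (K.e i) (TT K.ξ (K.e i)) = l * (K.e i) (K.η (K.e i))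
        + K.η (K.e i) * (K.e i) l := by
      rw [hTxi, deriv_mul]
    have h2 := K.eta_nabla hn (K.e i) (K.e i)
    have h3 : TT K.ξ (K.nabla (K.e i) (K.e i)) = l * K.η (K.nabla (K.e i) (K.e i)) :=
      hTxi _
    rw [h0, hbr, h1, h3]
    linear_combination -l * h2
  -- sum it up
  have hsum := Finset.sum_congr
    (rfl : (Finset.univ : Finset (Fin (2*n+1))) = Finset.univ) fun i _ => hterm i
  rw [Finset.sum_add_distrib, Finset.sum_add_distrib, Finset.sum_sub_distrib] at hsum
  have hLHS : ∑ i, K.g (K.Rm (K.e i) K.ξ F) (K.e i) = K.S K.ξ F := rfl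
  -- block 1
  have hb1a : ∑ i, -(l * (K.g (K.e i) (K.e i) - K.η (K.e i) * K.η (K.e i)))
      = -(l * (N1 - 1)) := by
    rw [Finset.sum_neg_distrib, ← Finset.mul_sum, Finset.sum_sub_distrib,
      K.sum_gee, K.sum_eta_sq, hN1]
  have hb1b : ∑ i, K.η (K.e i) * (K.e i) l = K.ξ l := (K.xi_apply l).symm
  -- block 2
  have hTsumV : ∑ i, TT (K.e i) (K.e i) = K.r + α * N1 + 1 := by
    have : ∀ i : Fin (2*n+1), TT (K.e i) (K.e i) = K.S (K.e i) (K.e i)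
        + α * K.g (K.e i) (K.e i) + K.η (K.e i) * K.η (K.e i) := fun i => hTTd _ _
    rw [Finset.sum_congr rfl fun i _ => this i, Finset.sum_add_distrib,
      Finset.sum_add_distrib, ← Finset.mul_sum, K.sum_gee, K.sum_eta_sq, hN1]
    rfl
  have hb2 : ∑ i, K.ξ (TT (K.e i) (K.e i)) = K.ξ K.r + N1 * K.ξ l := by
    rw [← map_sum, hTsumV, map_add, map_add, Derivation.map_one_eq_zero, add_zero,
      deriv_mul]
    have hξα : K.ξ α = K.ξ l := by
      rw [hα, map_add, map_sub, hN2, cast_deriv_zero K.ξ (2*n),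
        Derivation.map_one_eq_zero, sub_zero, add_zero]
    have hξN1 : K.ξ N1 = 0 := by rw [hN1]; exact cast_deriv_zero K.ξ (2*n+1)
    rw [hξα, hξN1]
    ring
  -- block 3
  have hfc : ∑ i, (TT (K.nabla K.ξ (K.e i)) (K.e i)
      + TT (K.e i) (K.nabla K.ξ (K.e i))) = 0 := by
    have hgs1 : ∀ (v : Fin (2*n+1) → C) (Y : Derivation ℝ C C),
        K.g (∑ i, v i • K.e i) Y = ∑ i, v i * K.g (K.e i) Y := by
      intro v Y
      rw [K.g_sum_left]
      exact Finset.sum_congr rfl fun i _ => by rw [K.g_smul_left]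
    have hgs2 : ∀ (v : Fin (2*n+1) → C) (Y : Derivation ℝ C C),
        K.g Y (∑ i, v i • K.e i) = ∑ i, v i * K.g Y (K.e i) := by
      intro v Y
      rw [K.g_sum_right]
      exact Finset.sum_congr rfl fun i _ => by rw [K.g_smul_right]
    have hL : ∀ (v : Fin (2*n+1) → C) (Y : Derivation ℝ C C),
        TT (∑ i, v i • K.e i) Y = ∑ i, v i * TT (K.e i) Y := by
      intro v Y
      rw [hTTd, K.S_sum1, hgs1, K.eta_sum, Finset.mul_sum, Finset.sum_mul,
        ← Finset.sum_add_distrib, ← Finset.sum_add_distrib]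
      refine Finset.sum_congr rfl fun i _ => ?_
      rw [hTTd]; ring
    have hR : ∀ (v : Fin (2*n+1) → C) (Y : Derivation ℝ C C),
        TT Y (∑ i, v i • K.e i) = ∑ i, v i * TT Y (K.e i) := by
      intro v Y
      rw [hTTd, K.S_sum2, hgs2, K.eta_sum, Finset.mul_sum, Finset.mul_sum,
        ← Finset.sum_add_distrib, ← Finset.sum_add_distrib]
      refine Finset.sum_congr rfl fun i _ => ?_
      rw [hTTd]; ring
    have := K.frame_cancel K.ξ TT hL hR
    simpa using this
  have hb3 : ∑ i, (TT (K.e i) (K.e i) - l * (K.η (K.e i) * K.η (K.e i))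
      - (TT (K.nabla K.ξ (K.e i)) (K.e i) + TT (K.e i) (K.nabla K.ξ (K.e i))))
      = (K.r + α * N1 + 1) - l * 1 - 0 := by
    rw [Finset.sum_sub_distrib, Finset.sum_sub_distrib, ← Finset.mul_sum,
      K.sum_eta_sq, hTsumV, hfc]
  rw [hb1a, hb1b, hb2, hb3, hLHS] at hsum
  -- value of LHS
  have hSF : K.S K.ξ F = -(N2 * K.ξ f) := by
    rw [K.S_xi2 hn F, K.eta_def F, hF K.ξ, hN2]
  rw [hSF] at hsum
  have hxr := K.xi_r hn
  rw [← hN2, ← hN1] at hxr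
  -- key scalar identity
  have hN1N2 : N1 = N2 + 1 := by rw [hN1, hN2]; push_cast; ring
  have hkey : N2 * (K.ξ f + K.ξ l) = K.r + N2 * N2 + 2 * N2 := by
    rw [hN1N2, hα] at hsum
    rw [hN1N2] at hxr
    linear_combination -hsum - hxr
  -- final algebra
  have hcast2 : N2 = algebraMap ℝ C (2 * (n:ℝ)) := by
    rw [hN2]
    have : ((2*n:ℕ):ℝ) = 2*(n:ℝ) := by push_cast; ring
    rw [← this, map_natCast]
  have hne : (2 * (n:ℝ)) ≠ 0 := by
    have : (0:ℝ) < (n:ℝ) := by exact_mod_cast hn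
    positivity
  have hxifl : K.ξ (f + l) = K.ξ f + K.ξ l := map_add K.ξ f l
  rw [hxifl]
  have hstep : K.ξ f + K.ξ l
      = (2 * (n:ℝ))⁻¹ • (N2 * (K.ξ f + K.ξ l)) := by
    rw [hcast2, Algebra.smul_def, ← mul_assoc, ← map_mul,
      inv_mul_cancel₀ hne, map_one, one_mul]
  have hsc : (2*(n:ℝ))⁻¹ • (algebraMap ℝ C (2*(n:ℝ)) * algebraMap ℝ C (2*(n:ℝ)))
      + (2*(n:ℝ))⁻¹ • (2 * algebraMap ℝ C (2*(n:ℝ)))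
      = algebraMap ℝ C (2*(n:ℝ) + 2) := by
    rw [Algebra.smul_def, Algebra.smul_def,
      (map_ofNat (algebraMap ℝ C) 2).symm,
      ← map_mul, ← map_mul, ← map_mul, ← map_mul, ← map_add]
    refine congrArg _ ?_
    field_simp
  rw [hstep, hkey, hcast2, smul_add, smul_add, add_assoc, hsc]

end KenmotsuManifold

open KenmotsuManifold in
/-- If the metric of a Kenmotsu manifold of dimension `2n+1` is a
gradient almost `*`-Ricci soliton, then `ξ(f+λ) = r/(2n) + 2n + 2`. -/
theorem stmt15 {n : ℕ} {C : Type*} [CommRing C] [Algebra ℝ C]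
    (K : KenmotsuManifold n C) (hn : 0 < n) (f l : C) (F : Derivation ℝ C C)
    (h : K.IsGradAlmostStarRicciSoliton f F l) :
    K.ξ (f + l) = (2 * (n : ℝ))⁻¹ • K.r + algebraMap ℝ C (2 * n + 2) := by
  exact stmt15' K hn f l F h
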